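/- Fix a > 0 and set t₀ = (a−1)², t₁ = (a+1)². On (t₁, ∞) let f(t) = (t−t₀)(t−t₁)/(4t²), g(t) = −1/(4t²), and φ(t) = (4·f(t)·f″(t) − 5·f′(t)²)/(16·f(t)³) + g(t)/f(t); define F_1 = φ/2 and F_{k+1}(t) = −F_k′(t)/(2·√(f(t))) − (1/2)·∑_{j=1}^{k−1} F_j(t)·F_{k−j}(t). Then: (i) φ(t) = −t·(t³ − (3a²−1)(a²−3)·t + 2(a²+1)(a²−1)²)/((t−t₀)(t−t₁))³ for all t > t₁; and (ii) for every k ≥ 1 and every t > t₁, F_k(t) = 2t·Q_k(a²; t)/((t−t₀)(t−t₁))^{(3k+3)/2}, where Q_k(a²; t) denotes the evaluation at A = a², X = t of the polynomial Q_k ∈ ℚ[A][X] defined by Q_1 = −(X³ − (3A−1)(A−3)·X + 2(A+1)(A−1)²)/4 and Q_{k+1} = (3(k+1)·X·w − s)·Q_k − X·s·Q_k′ − X·∑_{j=1}^{k−1} Q_j·Q_{k−j}, with s = X² − 2(A+1)·X + (A−1)² and w = X − (A+1). -/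

import Mathlib

open Polynomial

/-- The indeterminate `A`, as an element of the coefficient ring `ℚ[A]`. -/
noncomputable def Av : Polynomial ℚ := X

/-- `s = X² − 2(A+1)X + (A−1)² ∈ ℚ[A][X]`. -/
noncomputable def sLag : Polynomial (Polynomial ℚ) :=
  X ^ 2 - C (2 * (Av + 1)) * X + C ((Av - 1) ^ 2)

/-- `w = X − (A+1) ∈ ℚ[A][X]`. -/
noncomputable def wLag : Polynomial (Polynomial ℚ) := X - C (Av + 1)

/-- The polynomials `Q_k ∈ ℚ[A][X]`:
`Q_1 = −(X³ − (3A−1)(A−3)X + 2(A+1)(A−1)²)/4` and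
`Q_{k+1} = (3(k+1)·X·w − s)·Q_k − X·s·Q_k′ − X·∑_{j=1}^{k−1} Q_j·Q_{k−j}`. -/
noncomputable def QLag : ℕ → Polynomial (Polynomial ℚ)
  | 0 => 0
  | 1 => (-(1 : ℚ) / 4) •
      (X ^ 3 - C ((3 * Av - 1) * (Av - 3)) * X + C (2 * (Av + 1) * (Av - 1) ^ 2))
  | (k + 2) =>
      ((3 * ((k : ℚ) + 2)) • (X * wLag) - sLag) * QLag (k + 1)
        - X * sLag * derivative (QLag (k + 1))
        - X * ∑ j ∈ (Finset.Ico 1 (k + 1)).attach, QLag j.1 * QLag (k + 1 - j.1)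
  decreasing_by
    all_goals try (have hj := Finset.mem_Ico.mp j.2)
    all_goals omega

/-- The turning point `t₀ = (a−1)²`. -/
noncomputable def tpt0 (a : ℝ) : ℝ := (a - 1) ^ 2

/-- The turning point `t₁ = (a+1)²`. -/
noncomputable def tpt1 (a : ℝ) : ℝ := (a + 1) ^ 2

/-- `f(t) = (t−t₀)(t−t₁)/(4t²)`. -/
noncomputable def fLag (a : ℝ) (t : ℝ) : ℝ := (t - tpt0 a) * (t - tpt1 a) / (4 * t ^ 2)

/-- `g(t) = −1/(4t²)`. -/
noncomputable def gLag (t : ℝ) : ℝ := -1 / (4 * t ^ 2)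

/-- `φ(t) = (4f(t)f″(t) − 5f′(t)²)/(16f(t)³) + g(t)/f(t)`. -/
noncomputable def phiLag (a : ℝ) (t : ℝ) : ℝ :=
  (4 * fLag a t * deriv (deriv (fLag a)) t - 5 * (deriv (fLag a) t) ^ 2) /
      (16 * (fLag a t) ^ 3) +
    gLag t / fLag a t

/-- The functions `F_k`: `F_1 = φ/2` and
`F_{k+1}(t) = −F_k′(t)/(2√(f(t))) − (1/2)∑_{j=1}^{k−1} F_j(t)F_{k−j}(t)`. -/
noncomputable def FLag (a : ℝ) : ℕ → ℝ → ℝ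
  | 0 => fun _ => 0
  | 1 => fun t => phiLag a t / 2
  | (k + 2) => fun t =>
      -(deriv (FLag a (k + 1)) t) / (2 * Real.sqrt (fLag a t))
        - (1 / 2) *
            ∑ j ∈ (Finset.Ico 1 (k + 1)).attach, FLag a j.1 t * FLag a (k + 1 - j.1) t
  decreasing_by
    all_goals try (have hj := Finset.mem_Ico.mp j.2)
    all_goals omega

/-- Evaluation of `Q ∈ ℚ[A][X]` at `A = a²`, `X = t`. -/
noncomputable def evalQLag (a t : ℝ) (P : Polynomial (Polynomial ℚ)) : ℝ :=
  Polynomial.eval₂ ((Polynomial.aeval (a ^ 2 : ℝ) : Polynomial ℚ →ₐ[ℚ] ℝ) : Polynomial ℚ →+* ℝ)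
    t P

/-! ### Auxiliary lemmas -/

section Aux

lemma hasDerivAt_fLag' (a : ℝ) {t : ℝ} (ht : t ≠ 0) :
    HasDerivAt (fLag a)
      (((tpt0 a + tpt1 a) * t - 2 * (tpt0 a * tpt1 a)) / (4 * t ^ 3)) t := by
  have h4 : (4 : ℝ) * t ^ 2 ≠ 0 := by simp [ht]
  have hnum : HasDerivAt (fun s : ℝ => (s - tpt0 a) * (s - tpt1 a))
      (1 * (t - tpt1 a) + (t - tpt0 a) * 1) t :=
    ((hasDerivAt_id t).sub_const _).mul ((hasDerivAt_id t).sub_const _)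
  have hden : HasDerivAt (fun s : ℝ => 4 * s ^ 2) (4 * (2 * t ^ 1)) t :=
    (hasDerivAt_pow 2 t).const_mul 4
  have h := hnum.div hden h4
  have heq : fLag a = fun s : ℝ => (s - tpt0 a) * (s - tpt1 a) / (4 * s ^ 2) := rfl
  rw [heq]
  refine HasDerivAt.congr_deriv h ?_
  field_simp
  ring

lemma hasDerivAt_fd1 (a : ℝ) {t : ℝ} (ht : t ≠ 0) :
    HasDerivAt (fun s : ℝ => ((tpt0 a + tpt1 a) * s - 2 * (tpt0 a * tpt1 a)) / (4 * s ^ 3))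
      ((-2 * (tpt0 a + tpt1 a) * t + 6 * (tpt0 a * tpt1 a)) / (4 * t ^ 4)) t := by
  have h4 : (4 : ℝ) * t ^ 3 ≠ 0 := by simp [ht]
  have hnum : HasDerivAt (fun s : ℝ => (tpt0 a + tpt1 a) * s - 2 * (tpt0 a * tpt1 a))
      ((tpt0 a + tpt1 a) * 1) t := ((hasDerivAt_id t).const_mul _).sub_const _
  have hden : HasDerivAt (fun s : ℝ => 4 * s ^ 3) (4 * (3 * t ^ 2)) t :=
    (hasDerivAt_pow 3 t).const_mul 4
  have h := hnum.div hden h4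
  refine HasDerivAt.congr_deriv h ?_
  field_simp
  ring

lemma deriv_fLag (a : ℝ) {t : ℝ} (ht : t ≠ 0) :
    deriv (fLag a) t = ((tpt0 a + tpt1 a) * t - 2 * (tpt0 a * tpt1 a)) / (4 * t ^ 3) :=
  (hasDerivAt_fLag' a ht).deriv

lemma deriv_deriv_fLag (a : ℝ) {t : ℝ} (ht : t ≠ 0) :
    deriv (deriv (fLag a)) t
      = (-2 * (tpt0 a + tpt1 a) * t + 6 * (tpt0 a * tpt1 a)) / (4 * t ^ 4) := by
  have h1 : deriv (fLag a)
      =ᶠ[nhds t] fun s => ((tpt0 a + tpt1 a) * s - 2 * (tpt0 a * tpt1 a)) / (4 * s ^ 3) := by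
    filter_upwards [IsOpen.mem_nhds isOpen_compl_singleton ht] with x hx
    exact deriv_fLag a hx
  rw [h1.deriv_eq]
  exact (hasDerivAt_fd1 a ht).deriv

lemma phi_eq {a : ℝ} (ha : 0 < a) {t : ℝ} (ht : tpt1 a < t) :
    phiLag a t =
      -t * (t ^ 3 - (3 * a ^ 2 - 1) * (a ^ 2 - 3) * t + 2 * (a ^ 2 + 1) * (a ^ 2 - 1) ^ 2) /
        ((t - tpt0 a) * (t - tpt1 a)) ^ 3 := by
  have ht1 : 0 < tpt1 a := by unfold tpt1; nlinarith
  have htpos : 0 < t := lt_trans ht1 ht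
  have htne : t ≠ 0 := ne_of_gt htpos
  have h01 : tpt0 a < tpt1 a := by unfold tpt0 tpt1; nlinarith
  have h0 : t - tpt0 a ≠ 0 := by have := lt_trans h01 ht; linarith
  have h1 : t - tpt1 a ≠ 0 := by linarith
  unfold phiLag gLag
  rw [deriv_fLag a htne, deriv_deriv_fLag a htne]
  unfold fLag
  unfold tpt0 tpt1 at *
  field_simp
  ring

/-! ### Evaluation lemmas -/

lemma evalQ_mul (a t : ℝ) (P Q : Polynomial (Polynomial ℚ)) :
    evalQLag a t (P * Q) = evalQLag a t P * evalQLag a t Q := Polynomial.eval₂_mul _ _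

lemma evalQ_sub (a t : ℝ) (P Q : Polynomial (Polynomial ℚ)) :
    evalQLag a t (P - Q) = evalQLag a t P - evalQLag a t Q := by
  simp [evalQLag]

lemma evalQ_X (a t : ℝ) : evalQLag a t Polynomial.X = t := Polynomial.eval₂_X _ _

lemma evalQ_smul (a t : ℝ) (c : ℚ) (P : Polynomial (Polynomial ℚ)) :
    evalQLag a t (c • P) = (c : ℝ) * evalQLag a t P := by
  rw [Algebra.smul_def, evalQLag, Polynomial.eval₂_mul]
  congr 1
  simp [algebraMap]

lemma evalQ_sum (a t : ℝ) {ι : Type*} (s : Finset ι) (g : ι → Polynomial (Polynomial ℚ)) :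
    evalQLag a t (∑ i ∈ s, g i) = ∑ i ∈ s, evalQLag a t (g i) :=
  Polynomial.eval₂_finset_sum _ _ _ _

open Polynomial in
lemma evalQ_s (a t : ℝ) : evalQLag a t sLag = (t - tpt0 a) * (t - tpt1 a) := by
  simp only [sLag, Av, evalQLag, eval₂_add, eval₂_sub, eval₂_mul, eval₂_X, eval₂_C, eval₂_pow]
  simp only [map_mul, map_add, map_sub, map_pow, map_one, map_ofNat, RingHom.coe_coe, aeval_X,
    tpt0, tpt1]
  ring

open Polynomial in
lemma evalQ_w (a t : ℝ) : evalQLag a t wLag = t - (a ^ 2 + 1) := by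
  simp only [wLag, Av, evalQLag, eval₂_sub, eval₂_X, eval₂_C]
  simp only [map_add, map_one, RingHom.coe_coe, aeval_X]

open Polynomial in
lemma evalQ_Q1 (a t : ℝ) : evalQLag a t (QLag 1) =
    -(1/4 : ℝ) * (t ^ 3 - (3 * a ^ 2 - 1) * (a ^ 2 - 3) * t
      + 2 * (a ^ 2 + 1) * (a ^ 2 - 1) ^ 2) := by
  rw [QLag, evalQ_smul]
  simp only [Av, evalQLag, eval₂_add, eval₂_sub, eval₂_mul, eval₂_X, eval₂_C, eval₂_pow]
  simp only [map_mul, map_add, map_sub, map_pow, map_one, map_ofNat, RingHom.coe_coe, aeval_X]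
  push_cast
  ring

lemma hasDerivAt_evalQ (a : ℝ) (P : Polynomial (Polynomial ℚ)) (t : ℝ) :
    HasDerivAt (fun s => evalQLag a s P)
      (evalQLag a t (Polynomial.derivative P)) t := by
  simp only [evalQLag, ← Polynomial.eval_map, ← Polynomial.derivative_map]
  exact Polynomial.hasDerivAt _ t

lemma rpow_half {u : ℝ} (hu : 0 < u) (m : ℕ) :
    u ^ ((m : ℝ) / 2) = Real.sqrt u ^ m := by
  rw [Real.sqrt_eq_rpow, ← Real.rpow_natCast (u ^ ((1:ℝ)/2)) m, ← Real.rpow_mul hu.le]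
  congr 1
  ring

end Aux

/-! ### The main induction -/

lemma FLag_eq {a : ℝ} (ha : 0 < a) :
    ∀ k : ℕ, 1 ≤ k → ∀ t : ℝ, tpt1 a < t →
      FLag a k t = 2 * t * evalQLag a t (QLag k) /
        ((t - tpt0 a) * (t - tpt1 a)) ^ ((3 * (k : ℝ) + 3) / 2) := by
  intro k
  induction k using Nat.strong_induction_on with
  | _ k IH =>
    match k with
    | 0 => intro h; exact absurd h (by norm_num)
    | 1 =>
      intro _ t ht
      have ht1 : 0 < tpt1 a := by unfold tpt1; nlinarith
      have htpos : 0 < t := lt_trans ht1 ht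
      have h01 : tpt0 a < tpt1 a := by unfold tpt0 tpt1; nlinarith
      have hu : 0 < (t - tpt0 a) * (t - tpt1 a) := by
        apply mul_pos <;> [linarith; linarith]
      have he : (3 * ((1 : ℕ) : ℝ) + 3) / 2 = ((3 : ℕ) : ℝ) := by norm_num
      rw [FLag]; beta_reduce
      rw [phi_eq ha ht, evalQ_Q1, he, Real.rpow_natCast]
      have h3 : ((t - tpt0 a) * (t - tpt1 a)) ^ (3:ℕ) ≠ 0 := by positivity
      field_simp
      ring
    | (k + 2) =>
      intro _ t ht
      have ht1 : 0 < tpt1 a := by unfold tpt1; nlinarith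
      have htpos : 0 < t := lt_trans ht1 ht
      have htne : t ≠ 0 := ne_of_gt htpos
      have h01 : tpt0 a < tpt1 a := by unfold tpt0 tpt1; nlinarith
      have hu : 0 < (t - tpt0 a) * (t - tpt1 a) := by
        apply mul_pos <;> [linarith; linarith]
      have hune : (t - tpt0 a) * (t - tpt1 a) ≠ 0 := ne_of_gt hu
      have hvpos : 0 < Real.sqrt ((t - tpt0 a) * (t - tpt1 a)) := Real.sqrt_pos.mpr hu
      have hvne : Real.sqrt ((t - tpt0 a) * (t - tpt1 a)) ≠ 0 := ne_of_gt hvpos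
      have hv2 : (t - tpt0 a) * (t - tpt1 a)
          = Real.sqrt ((t - tpt0 a) * (t - tpt1 a)) ^ 2 :=
        (Real.sq_sqrt hu.le).symm
      -- √(f t) = √u / (2t)
      have hsq : Real.sqrt (fLag a t)
          = Real.sqrt ((t - tpt0 a) * (t - tpt1 a)) / (2 * t) := by
        have hf : fLag a t
            = (Real.sqrt ((t - tpt0 a) * (t - tpt1 a)) / (2 * t)) ^ 2 := by
          rw [div_pow, Real.sq_sqrt hu.le]
          unfold fLag
          congr 1
          ring
        rw [hf, Real.sqrt_sq (by positivity)]
      -- derivative of the closed form of F_{k+1}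
      set r : ℝ := (3 * (((k + 1) : ℕ) : ℝ) + 3) / 2 with hr_def
      have hurne : ((t - tpt0 a) * (t - tpt1 a)) ^ r ≠ 0 :=
        (Real.rpow_pos_of_pos hu r).ne'
      have hnum : HasDerivAt (fun x : ℝ => 2 * x * evalQLag a x (QLag (k + 1)))
          (2 * 1 * evalQLag a t (QLag (k + 1))
            + 2 * t * evalQLag a t (Polynomial.derivative (QLag (k + 1)))) t :=
        (((hasDerivAt_id t).const_mul 2).mul (hasDerivAt_evalQ a (QLag (k + 1)) t))
      have hden : HasDerivAt (fun x : ℝ => ((x - tpt0 a) * (x - tpt1 a)) ^ r)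
          ((1 * (t - tpt1 a) + (t - tpt0 a) * 1) * r
            * ((t - tpt0 a) * (t - tpt1 a)) ^ (r - 1)) t :=
        (((hasDerivAt_id t).sub_const _).mul
          ((hasDerivAt_id t).sub_const _)).rpow_const (Or.inl hune)
      have hd := hnum.div hden hurne
      have hdF : deriv (FLag a (k + 1)) t =
          ((2 * 1 * evalQLag a t (QLag (k + 1))
              + 2 * t * evalQLag a t (Polynomial.derivative (QLag (k + 1))))
              * ((t - tpt0 a) * (t - tpt1 a)) ^ r
            - 2 * t * evalQLag a t (QLag (k + 1))
              * ((1 * (t - tpt1 a) + (t - tpt0 a) * 1) * r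
                * ((t - tpt0 a) * (t - tpt1 a)) ^ (r - 1)))
            / (((t - tpt0 a) * (t - tpt1 a)) ^ r) ^ 2 := by
        have heq : FLag a (k + 1) =ᶠ[nhds t]
            fun x : ℝ => 2 * x * evalQLag a x (QLag (k + 1)) /
              ((x - tpt0 a) * (x - tpt1 a)) ^ r := by
          filter_upwards [isOpen_Ioi.mem_nhds ht] with x hx
          exact IH (k + 1) (by omega) (by omega) x hx
        rw [heq.deriv_eq]; exact hd.deriv
      -- the sum term
      have hsum : ∑ j ∈ (Finset.Ico 1 (k + 1)).attach,
            FLag a j.1 t * FLag a (k + 1 - j.1) t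
          = (4 * t ^ 2 / Real.sqrt ((t - tpt0 a) * (t - tpt1 a)) ^ (3 * k + 9))
            * evalQLag a t (∑ j ∈ (Finset.Ico 1 (k + 1)).attach,
                QLag j.1 * QLag (k + 1 - j.1)) := by
        rw [evalQ_sum, Finset.mul_sum]
        refine Finset.sum_congr rfl ?_
        intro j _
        obtain ⟨hj1, hj2⟩ := Finset.mem_Ico.mp j.2
        rw [IH j.1 (by omega) hj1 t ht, IH (k + 1 - j.1) (by omega) (by omega) t ht,
          evalQ_mul]
        have e1 : (3 * ((j.1 : ℕ) : ℝ) + 3) / 2 = (((3 * j.1 + 3 : ℕ)) : ℝ) / 2 := by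
          push_cast; ring
        have e2 : (3 * (((k + 1 - j.1) : ℕ) : ℝ) + 3) / 2
            = (((3 * (k + 1 - j.1) + 3 : ℕ)) : ℝ) / 2 := by push_cast; ring
        rw [e1, e2, rpow_half hu, rpow_half hu, div_mul_div_comm, ← pow_add]
        have e3 : 3 * j.1 + 3 + (3 * (k + 1 - j.1) + 3) = 3 * k + 9 := by omega
        rw [e3]
        ring
      -- rewrite the rpow exponents as powers of √u
      have er : ((t - tpt0 a) * (t - tpt1 a)) ^ r
          = Real.sqrt ((t - tpt0 a) * (t - tpt1 a)) ^ (3 * k + 6) := by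
        have : r = (((3 * k + 6 : ℕ)) : ℝ) / 2 := by rw [hr_def]; push_cast; ring
        rw [this, rpow_half hu]
      have er1 : ((t - tpt0 a) * (t - tpt1 a)) ^ (r - 1)
          = Real.sqrt ((t - tpt0 a) * (t - tpt1 a)) ^ (3 * k + 4) := by
        have : r - 1 = (((3 * k + 4 : ℕ)) : ℝ) / 2 := by rw [hr_def]; push_cast; ring
        rw [this, rpow_half hu]
      have etgt : ((t - tpt0 a) * (t - tpt1 a)) ^ ((3 * (((k + 2) : ℕ) : ℝ) + 3) / 2)
          = Real.sqrt ((t - tpt0 a) * (t - tpt1 a)) ^ (3 * k + 9) := by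
        have : (3 * (((k + 2) : ℕ) : ℝ) + 3) / 2 = (((3 * k + 9 : ℕ)) : ℝ) / 2 := by
          push_cast; ring
        rw [this, rpow_half hu]
      have hrval : r = (3 * (k : ℝ) + 6) / 2 := by rw [hr_def]; push_cast; ring
      -- unfold both sides
      rw [FLag]; beta_reduce
      rw [hdF, hsq, hsum, QLag]
      have hs2 : evalQLag a t sLag = Real.sqrt ((t - tpt0 a) * (t - tpt1 a)) ^ 2 := by
        rw [evalQ_s]; exact hv2
      simp only [evalQ_sub, evalQ_mul, evalQ_smul, evalQ_X, hs2, evalQ_w]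
      rw [etgt, er, er1, hrval]
      have hlin : 1 * (t - tpt1 a) + (t - tpt0 a) * 1 = 2 * (t - (a ^ 2 + 1)) := by
        unfold tpt0 tpt1; ring
      rw [hlin]
      set v := Real.sqrt ((t - tpt0 a) * (t - tpt1 a)) with hv_def
      push_cast
      field_simp
      ring

/-- For every `a > 0`:
(i) `φ(t) = −t(t³ − (3a²−1)(a²−3)t + 2(a²+1)(a²−1)²)/((t−t₀)(t−t₁))³` for `t > t₁`; and
(ii) for every `k ≥ 1` and `t > t₁`, `F_k(t) = 2t·Q_k(a²;t)/((t−t₀)(t−t₁))^{(3k+3)/2}`. -/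
theorem stmt19 (a : ℝ) (ha : 0 < a) :
    (∀ t : ℝ, tpt1 a < t →
      phiLag a t =
        -t * (t ^ 3 - (3 * a ^ 2 - 1) * (a ^ 2 - 3) * t + 2 * (a ^ 2 + 1) * (a ^ 2 - 1) ^ 2) /
          ((t - tpt0 a) * (t - tpt1 a)) ^ 3) ∧
    (∀ k : ℕ, 1 ≤ k → ∀ t : ℝ, tpt1 a < t →
      FLag a k t =
        2 * t * evalQLag a t (QLag k) /
          ((t - tpt0 a) * (t - tpt1 a)) ^ ((3 * (k : ℝ) + 3) / 2)) := by
  exact ⟨fun t ht => phi_eq ha ht, FLag_eq ha⟩
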